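/- Let L ≥ 1, h ≥ 1 and let W⁽¹⁾,…,W⁽ᴸ⁾ ∈ ℝ^{h×h} be weight matrices whose entries all satisfy |w⁽ᵖ⁾_{ij}| ≤ M for some M > 0 with hM > 1. Let x = x⁽¹⁾ ∈ ℝ^h with ‖x‖₂ ≤ M_x, define z⁽ᵖ⁾ = W⁽ᵖ⁾x⁽ᵖ⁾, x⁽ᵖ⁺¹⁾ = D⁽ᵖ⁾z⁽ᵖ⁾ with D⁽ᵖ⁾ = diag(𝟙[z⁽ᵖ⁾ ≥ 0]); set G⁽ᴸ⁾ = I_h and G⁽ᵖ⁾ = W⁽ᴸ⁾D⁽ᴸ⁻¹⁾W⁽ᴸ⁻¹⁾⋯W⁽ᵖ⁺¹⁾D⁽ᵖ⁾ for p < L; let F be the matrix whose transpose stacks vertically the blocks (G⁽ᵖ⁾)ᵀ ⊗ x⁽ᵖ⁾ and (G⁽ᵖ⁾)ᵀ for p = 1,…,L; let p ∈ ℝ^h be a probability vector, A = diag(p) − ppᵀ, and H = FᵀAF. Then ‖H‖₂ ≤ L·√2·M_x²·(hM)^{2L} + √2·(hM)²((hM)^{2L} − 1)/((hM)² − 1).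 -/

import Mathlib

open Matrix BigOperators

/-- The spectral norm (ℓ² operator norm) of a real matrix. -/
noncomputable def matrixSpectralNorm {m n : Type*} [Fintype m] [Fintype n] [DecidableEq n]
    (A : Matrix m n ℝ) : ℝ :=
  ‖LinearMap.toContinuousLinearMap (Matrix.toEuclideanLin A)‖

/-- The Euclidean norm of a real vector. -/
noncomputable def eNorm {n : Type*} [Fintype n] (x : n → ℝ) : ℝ :=
  Real.sqrt (∑ i, x i ^ 2)

/-!
Put `a = hM`. Bounding the spectral norm by the Frobenius norm gives `‖W⁽ᵖ⁾‖₂ ≤ a`, and the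
masks `D⁽ᵖ⁾` have norm at most `1`; hence `‖x⁽ᵖ⁾‖ ≤ M_x a^(p-1)` going forward and
`‖G⁽ᵖ⁾‖₂ ≤ a^(L-p)` going backward. The blocks of `Fᵀ` send `v` to `(G⁽ᵖ⁾)ᵀv ⊗ x⁽ᵖ⁾` and
`(G⁽ᵖ⁾)ᵀv`, so `‖F‖₂² ≤ ∑ₚ (‖x⁽ᵖ⁾‖² + 1) ‖G⁽ᵖ⁾‖₂²`, a geometric sum. Finally the Frobenius norm
of `diag(p) - ppᵀ` is at most `√2`, and `‖FᵀAF‖₂ ≤ ‖A‖₂ ‖F‖₂²`.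
-/

open scoped Matrix.Norms.L2Operator

section EuclideanNorm

variable {n : Type*} [Fintype n]

lemma eNorm_nonneg (x : n → ℝ) : 0 ≤ eNorm x := Real.sqrt_nonneg _

lemma eNorm_sq (x : n → ℝ) : eNorm x ^ 2 = ∑ i, x i ^ 2 :=
  Real.sq_sqrt (Finset.sum_nonneg fun _ _ => sq_nonneg _)

lemma eNorm_eq_norm_toLp (x : n → ℝ) : eNorm x = ‖WithLp.toLp 2 x‖ := by
  simp [eNorm, EuclideanSpace.norm_eq]

end EuclideanNorm

namespace Matrix

variable {ι κ α m n : Type*} [Fintype ι] [Fintype κ] [Fintype α] [Fintype m] [Fintype n]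
  [DecidableEq n]

lemma matrixSpectralNorm_eq_l2_opNorm (A : Matrix m n ℝ) : matrixSpectralNorm A = ‖A‖ := rfl

lemma eNorm_mulVec_le (A : Matrix m n ℝ) (v : n → ℝ) : eNorm (A *ᵥ v) ≤ ‖A‖ * eNorm v := by
  simpa [eNorm_eq_norm_toLp] using A.l2_opNorm_mulVec (WithLp.toLp 2 v)

lemma sum_sq_mulVec_le (A : Matrix m n ℝ) (v : n → ℝ) :
    ∑ i, (A *ᵥ v) i ^ 2 ≤ ‖A‖ ^ 2 * ∑ j, v j ^ 2 := by
  rw [← eNorm_sq, ← eNorm_sq, ← mul_pow]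
  exact pow_le_pow_left₀ (eNorm_nonneg _) (A.eNorm_mulVec_le v) 2

lemma l2_opNorm_le_sqrt_of_sum_sq_mulVec_le (A : Matrix m n ℝ) {C : ℝ} (hC : 0 ≤ C)
    (h : ∀ v, ∑ i, (A *ᵥ v) i ^ 2 ≤ C * ∑ j, v j ^ 2) : ‖A‖ ≤ √C := by
  refine ContinuousLinearMap.opNorm_le_bound _ (Real.sqrt_nonneg C) fun v => ?_
  have hv := Real.sqrt_le_sqrt (h v.ofLp)
  rw [Real.sqrt_mul hC, ← eNorm, ← eNorm, eNorm_eq_norm_toLp, eNorm_eq_norm_toLp] at hv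
  exact hv

lemma l2_opNorm_le_sqrt_sum_sq (A : Matrix m n ℝ) : ‖A‖ ≤ √(∑ i, ∑ j, A i j ^ 2) := by
  refine A.l2_opNorm_le_sqrt_of_sum_sq_mulVec_le (by positivity) fun v => ?_
  rw [Finset.sum_mul]
  exact Finset.sum_le_sum fun i _ => Finset.sum_mul_sq_le_sq_mul_sq _ _ _

lemma l2_opNorm_le_of_abs_le (A : Matrix m n ℝ) {M : ℝ} (hM : 0 ≤ M)
    (hA : ∀ i j, |A i j| ≤ M) : ‖A‖ ≤ √(Fintype.card m * Fintype.card n) * M := by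
  have hsum : ∑ i, ∑ j, A i j ^ 2 ≤ (√(Fintype.card m * Fintype.card n) * M) ^ 2 := calc
    ∑ i, ∑ j, A i j ^ 2 ≤ ∑ _i : m, ∑ _j : n, M ^ 2 :=
      Finset.sum_le_sum fun i _ => Finset.sum_le_sum fun j _ => sq_le_sq.mpr <|
        (hA i j).trans_eq (abs_of_nonneg hM).symm
    _ = (√(Fintype.card m * Fintype.card n) * M) ^ 2 := by
      rw [mul_pow, Real.sq_sqrt (by positivity)]
      simp [mul_assoc]
  calc ‖A‖ ≤ √(∑ i, ∑ j, A i j ^ 2) := A.l2_opNorm_le_sqrt_sum_sq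
    _ ≤ √(Fintype.card m * Fintype.card n) * M :=
      (Real.sqrt_le_sqrt hsum).trans_eq (Real.sqrt_sq (by positivity))

lemma l2_opNorm_diagonal_le_one {d : n → ℝ} (hd : ∀ i, |d i| ≤ 1) : ‖diagonal d‖ ≤ 1 := by
  rw [l2_opNorm_diagonal]
  exact (pi_norm_le_iff_of_nonneg zero_le_one).mpr hd

lemma l2_opNorm_transpose [DecidableEq m] (A : Matrix m n ℝ) : ‖Aᵀ‖ = ‖A‖ := by
  rw [← conjTranspose_eq_transpose_of_trivial, l2_opNorm_conjTranspose]

lemma l2_opNorm_mul_mul_transpose_le [DecidableEq m] (F : Matrix m n ℝ) (A : Matrix n n ℝ) :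
    ‖F * A * Fᵀ‖ ≤ ‖A‖ * ‖F‖ ^ 2 := calc
  ‖F * A * Fᵀ‖ ≤ ‖F‖ * ‖A‖ * ‖Fᵀ‖ :=
    (l2_opNorm_mul _ _).trans (by gcongr; exact l2_opNorm_mul _ _)
  _ = ‖A‖ * ‖F‖ ^ 2 := by rw [l2_opNorm_transpose]; ring

lemma l2_opNorm_diagonal_sub_vecMulVec_le_sqrt_two {p : n → ℝ} (hp : ∀ i, 0 ≤ p i)
    (hp1 : ∑ i, p i = 1) : ‖diagonal p - vecMulVec p p‖ ≤ √2 := by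
  have hsq : ∑ i, p i ^ 2 ≤ 1 := by
    simpa [hp1] using Finset.sum_sq_le_sq_sum_of_nonneg (s := Finset.univ) fun i _ => hp i
  have hentry : ∀ i j,
      (diagonal p - vecMulVec p p) i j ^ 2 ≤ diagonal p i j ^ 2 + (p i * p j) ^ 2 := by
    intro i j
    -- `(u - v)² ≤ u² + v²` since `u` and `v` have the same sign
    have hsign : 0 ≤ diagonal p i j * (p i * p j) := by
      rw [diagonal_apply]
      split_ifs
      · exact mul_nonneg (hp i) (mul_nonneg (hp i) (hp j))
      · rw [zero_mul]
    rw [sub_apply, vecMulVec_apply]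
    nlinarith
  refine (l2_opNorm_le_sqrt_sum_sq _).trans (Real.sqrt_le_sqrt ?_)
  calc ∑ i, ∑ j, (diagonal p - vecMulVec p p) i j ^ 2
      ≤ ∑ i, ∑ j, (diagonal p i j ^ 2 + (p i * p j) ^ 2) :=
        Finset.sum_le_sum fun i _ => Finset.sum_le_sum fun j _ => hentry i j
    _ = ∑ i, p i ^ 2 + (∑ i, p i ^ 2) ^ 2 := by
        simp [Finset.sum_add_distrib, diagonal_apply, mul_pow, sq (∑ i, p i ^ 2),
          Finset.sum_mul_sum]
    _ ≤ 2 := by nlinarith [Finset.sum_nonneg fun i (_ : i ∈ Finset.univ) => sq_nonneg (p i)]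

lemma l2_opNorm_sq_le_of_kronecker_stack (F : Matrix (ι × ((κ × α) ⊕ κ)) n ℝ)
    (B : ι → Matrix κ n ℝ) (x : ι → α → ℝ)
    (hF₁ : ∀ ℓ i a j, F (ℓ, Sum.inl (i, a)) j = B ℓ i j * x ℓ a)
    (hF₂ : ∀ ℓ i j, F (ℓ, Sum.inr i) j = B ℓ i j) :
    ‖F‖ ^ 2 ≤ ∑ ℓ, (eNorm (x ℓ) ^ 2 + 1) * ‖B ℓ‖ ^ 2 := by
  have hblock : ∀ v ℓ,
      ∑ s, (F *ᵥ v) (ℓ, s) ^ 2 = (eNorm (x ℓ) ^ 2 + 1) * ∑ i, (B ℓ *ᵥ v) i ^ 2 := by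
    intro v ℓ
    have h₁ : ∀ i a, (F *ᵥ v) (ℓ, Sum.inl (i, a)) = x ℓ a * (B ℓ *ᵥ v) i := by
      intro i a
      simp only [mulVec, dotProduct, hF₁, Finset.mul_sum]
      exact Finset.sum_congr rfl fun j _ => by ring
    have h₂ : ∀ i, (F *ᵥ v) (ℓ, Sum.inr i) = (B ℓ *ᵥ v) i := by
      intro i
      simp only [mulVec, dotProduct, hF₂]
    simp only [Fintype.sum_sum_type, Fintype.sum_prod_type, h₁, h₂, mul_pow, eNorm_sq,
      ← Finset.mul_sum, ← Finset.sum_mul]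
    ring
  have hS : 0 ≤ ∑ ℓ, (eNorm (x ℓ) ^ 2 + 1) * ‖B ℓ‖ ^ 2 := by positivity
  refine (Real.le_sqrt (norm_nonneg F) hS).mp <|
    F.l2_opNorm_le_sqrt_of_sum_sq_mulVec_le hS fun v => ?_
  calc ∑ s, (F *ᵥ v) s ^ 2
      = ∑ ℓ, (eNorm (x ℓ) ^ 2 + 1) * ∑ i, (B ℓ *ᵥ v) i ^ 2 := by
        rw [Fintype.sum_prod_type]; exact Finset.sum_congr rfl fun ℓ _ => hblock v ℓ
    _ ≤ ∑ ℓ, (eNorm (x ℓ) ^ 2 + 1) * (‖B ℓ‖ ^ 2 * ∑ j, v j ^ 2) := by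
        gcongr with ℓ _
        exact sum_sq_mulVec_le _ _
    _ = (∑ ℓ, (eNorm (x ℓ) ^ 2 + 1) * ‖B ℓ‖ ^ 2) * ∑ j, v j ^ 2 := by
        rw [Finset.sum_mul]; simp only [mul_assoc]

end Matrix

lemma sum_fin_pow_sub_eq (L : ℕ) {r : ℝ} (hr : r ≠ 1) :
    ∑ ℓ : Fin L, r ^ (L - ℓ.1) = r * (r ^ L - 1) / (r - 1) := by
  rw [Fin.sum_univ_eq_sum_range (fun ℓ => r ^ (L - ℓ)), ← Finset.sum_range_reflect]
  calc ∑ ℓ ∈ Finset.range L, r ^ (L - (L - 1 - ℓ))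
      = ∑ ℓ ∈ Finset.range L, r * r ^ ℓ :=
        Finset.sum_congr rfl fun ℓ hℓ => by
          rw [Finset.mem_range] at hℓ
          rw [show L - (L - 1 - ℓ) = ℓ + 1 by omega, pow_succ']
    _ = r * (r ^ L - 1) / (r - 1) := by rw [← Finset.mul_sum, geom_sum_eq hr, mul_div_assoc]

lemma sum_fin_mul_pow_add_one_mul_pow_sub_eq (L : ℕ) (c : ℝ) {r : ℝ} (hr : r ≠ 1) :
    ∑ ℓ : Fin L, (c * r ^ ℓ.1 + 1) * r ^ (L - ℓ.1) = L * c * r ^ L + r * (r ^ L - 1) / (r - 1) := by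
  have hsplit : ∀ ℓ : Fin L, (c * r ^ ℓ.1 + 1) * r ^ (L - ℓ.1) = c * r ^ L + r ^ (L - ℓ.1) := by
    intro ℓ
    rw [add_mul, mul_assoc, ← pow_add, Nat.add_sub_cancel' ℓ.2.le, one_mul]
  simp only [hsplit, Finset.sum_add_distrib, sum_fin_pow_sub_eq L hr, Finset.sum_const,
    Finset.card_univ, Fintype.card_fin, nsmul_eq_mul, mul_assoc]

section NetworkBounds

variable {n : Type*} [Fintype n] [DecidableEq n]

lemma eNorm_le_mul_pow_of_succ_eq_mulVec {L : ℕ} {x : ℕ → n → ℝ} {T : ℕ → Matrix n n ℝ} {a c : ℝ}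
    (ha : 0 ≤ a) (hT : ∀ q < L, ‖T q‖ ≤ a) (hx : ∀ q < L, x (q + 1) = T q *ᵥ x q)
    (hx₀ : eNorm (x 0) ≤ c) : ∀ q ≤ L, eNorm (x q) ≤ c * a ^ q := by
  intro q hq
  induction q with
  | zero => simpa using hx₀
  | succ q ih =>
    calc eNorm (x (q + 1)) ≤ ‖T q‖ * eNorm (x q) := hx q hq ▸ (T q).eNorm_mulVec_le (x q)
      _ ≤ a * (c * a ^ q) := mul_le_mul (hT q hq) (ih (by omega)) (eNorm_nonneg _) ha
      _ = c * a ^ (q + 1) := by ring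

lemma l2_opNorm_le_pow_of_succ_eq_mul {L : ℕ} {G T : ℕ → Matrix n n ℝ} {a : ℝ} (ha : 0 ≤ a)
    (hGL : ‖G L‖ ≤ 1) (hT : ∀ q, q + 1 < L → ‖T q‖ ≤ a)
    (hG : ∀ q, q + 1 < L → G (q + 1) = G (q + 2) * T q) :
    ∀ q < L, ‖G (q + 1)‖ ≤ a ^ (L - 1 - q) := by
  intro q hq
  refine Nat.decreasingInduction (motive := fun q _ => ‖G (q + 1)‖ ≤ a ^ (L - 1 - q))
    (fun k hk ih => ?_) ?_ (Nat.le_sub_one_of_lt hq)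
  · calc ‖G (k + 1)‖ ≤ ‖G (k + 2)‖ * ‖T k‖ := hG k (by omega) ▸ l2_opNorm_mul _ _
      _ ≤ a ^ (L - 1 - (k + 1)) * a :=
        mul_le_mul ih (hT k (by omega)) (norm_nonneg _) (by positivity)
      _ = a ^ (L - 1 - k) := by rw [← pow_succ]; congr 1; omega
  · simpa [Nat.sub_add_cancel (by omega : 1 ≤ L)] using hGL

end NetworkBounds

/-- Indexing convention: for `q = 0, …, L-1`, `W q` is the paper's `W⁽q⁺¹⁾`,
`xv q` is the paper's `x⁽q⁺¹⁾` (so `xv 0 = x`), `zv q` is the paper's `z⁽q⁺¹⁾`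
and `Dm q` is the paper's `D⁽q⁺¹⁾`; for `q = 1, …, L`, `G q` is the paper's
`G⁽q⁾`, with `G L = I`.  `Ft` is the paper's `Fᵀ`, stacking the blocks
`(G⁽ᵖ⁾)ᵀ ⊗ x⁽ᵖ⁾` and `(G⁽ᵖ⁾)ᵀ` for `p = ℓ+1`, `ℓ : Fin L`. -/
theorem spectral_norm_bound_of_G_term_hessian_entrywise_general
    (L h : ℕ)
    (W : ℕ → Matrix (Fin h) (Fin h) ℝ)
    (M : ℝ) (hM : 0 < M) (hhM : 1 < (h : ℝ) * M)
    (hWM : ∀ q < L, ∀ i j, |W q i j| ≤ M)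
    (xv : ℕ → Fin h → ℝ)
    (zv : ℕ → Fin h → ℝ)
    (hz : ∀ q < L, zv q = (W q).mulVec (xv q))
    (Dm : ℕ → Matrix (Fin h) (Fin h) ℝ)
    (hD : ∀ q < L, Dm q = Matrix.diagonal fun i => if 0 ≤ zv q i then (1 : ℝ) else 0)
    (hxrec : ∀ q < L, xv (q + 1) = (Dm q).mulVec (zv q))
    (G : ℕ → Matrix (Fin h) (Fin h) ℝ)
    (hGL : G L = 1)
    (hG : ∀ q, q + 1 < L → G (q + 1) = G (q + 2) * W (q + 1) * Dm q)
    (Ft : Matrix (Fin L × ((Fin h × Fin h) ⊕ Fin h)) (Fin h) ℝ)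
    (hFt1 : ∀ (ℓ : Fin L) (i : Fin h) (a : Fin h) (j : Fin h),
      Ft (ℓ, Sum.inl (i, a)) j = (G (ℓ.1 + 1))ᵀ i j * xv ℓ.1 a)
    (hFt2 : ∀ (ℓ : Fin L) (i : Fin h) (j : Fin h),
      Ft (ℓ, Sum.inr i) j = (G (ℓ.1 + 1))ᵀ i j)
    (pv : Fin h → ℝ) (hpv : ∀ j, 0 ≤ pv j) (hpsum : ∑ j, pv j = 1)
    (Mx : ℝ) (hx : eNorm (xv 0) ≤ Mx) :
    matrixSpectralNorm (Ft * (Matrix.diagonal pv - Matrix.vecMulVec pv pv) * Ftᵀ) ≤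
      (L : ℝ) * Real.sqrt 2 * Mx ^ 2 * ((h : ℝ) * M) ^ (2 * L)
        + Real.sqrt 2 * (((h : ℝ) * M) ^ 2 * (((h : ℝ) * M) ^ (2 * L) - 1)
            / (((h : ℝ) * M) ^ 2 - 1)) := by
  set a := (h : ℝ) * M
  have ha : 1 < a := hhM
  have hW : ∀ q < L, ‖W q‖ ≤ a := fun q hq => by
    simpa [Real.sqrt_mul_self (Nat.cast_nonneg h)] using
      (W q).l2_opNorm_le_of_abs_le hM.le (hWM q hq)
  have hDm : ∀ q < L, ‖Dm q‖ ≤ 1 := fun q hq => by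
    rw [hD q hq]
    exact l2_opNorm_diagonal_le_one fun i => by split_ifs <;> norm_num
  have hxv : ∀ q ≤ L, eNorm (xv q) ≤ Mx * a ^ q :=
    eNorm_le_mul_pow_of_succ_eq_mulVec (T := fun q => Dm q * W q) (by positivity)
      (fun q hq => (l2_opNorm_mul _ _).trans <|
        (mul_le_of_le_one_left (norm_nonneg _) (hDm q hq)).trans (hW q hq))
      (fun q hq => by rw [hxrec q hq, hz q hq, mulVec_mulVec]) hx
  have hGb : ∀ q < L, ‖G (q + 1)‖ ≤ a ^ (L - 1 - q) :=
    l2_opNorm_le_pow_of_succ_eq_mul (T := fun q => W (q + 1) * Dm q) (by positivity)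
      (by rw [hGL, ← diagonal_one]; exact l2_opNorm_diagonal_le_one fun _ => by norm_num)
      (fun q hq => (l2_opNorm_mul _ _).trans <|
        (mul_le_of_le_one_right (norm_nonneg _) (hDm q (by omega))).trans (hW _ hq))
      (fun q hq => by rw [hG q hq, mul_assoc])
  have hFt : ‖Ft‖ ^ 2 ≤ L * Mx ^ 2 * (a ^ 2) ^ L + a ^ 2 * ((a ^ 2) ^ L - 1) / (a ^ 2 - 1) := calc
    ‖Ft‖ ^ 2 ≤ ∑ ℓ : Fin L, (eNorm (xv ℓ) ^ 2 + 1) * ‖(G (ℓ.1 + 1))ᵀ‖ ^ 2 :=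
      l2_opNorm_sq_le_of_kronecker_stack Ft _ _ hFt1 hFt2
    _ ≤ ∑ ℓ : Fin L, (Mx ^ 2 * (a ^ 2) ^ ℓ.1 + 1) * (a ^ 2) ^ (L - ℓ.1) := by
      gcongr with ℓ
      · exact (pow_le_pow_left₀ (eNorm_nonneg _) (hxv ℓ ℓ.2.le) 2).trans_eq (by ring)
      -- the stated bound comes from the cruder `‖G⁽ᵖ⁾‖₂ ≤ a^(L-p+1)`
      · rw [l2_opNorm_transpose, ← pow_mul, mul_comm 2, pow_mul]
        gcongr
        exact (hGb ℓ ℓ.2).trans (pow_le_pow_right₀ ha.le (by omega))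
    _ = _ := sum_fin_mul_pow_add_one_mul_pow_sub_eq L _ (by nlinarith)
  rw [matrixSpectralNorm_eq_l2_opNorm]
  calc ‖Ft * (diagonal pv - vecMulVec pv pv) * Ftᵀ‖
      ≤ ‖diagonal pv - vecMulVec pv pv‖ * ‖Ft‖ ^ 2 := l2_opNorm_mul_mul_transpose_le _ _
    _ ≤ √2 * (L * Mx ^ 2 * (a ^ 2) ^ L + a ^ 2 * ((a ^ 2) ^ L - 1) / (a ^ 2 - 1)) :=
      mul_le_mul (l2_opNorm_diagonal_sub_vecMulVec_le_sqrt_two hpv hpsum) hFt (by positivity)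
        (by positivity)
    _ = _ := by rw [← pow_mul]; ring

/-- **Lemma 1.**  Spectral-norm bound for the G-term Hessian approximation
`H = Fᵀ A F` of an `L`-layer width-`h` fully connected ReLU network without
bias terms, with each weight-matrix entry bounded by `M` (so `‖W‖₂ ≤ hM`).

Indexing convention: for `q = 0, …, L-1`, `W q` is the paper's `W⁽q⁺¹⁾`,
`xv q` is the paper's `x⁽q⁺¹⁾` (so `xv 0 = x`), `zv q` is the paper's `z⁽q⁺¹⁾`
and `Dm q` is the paper's `D⁽q⁺¹⁾`; for `q = 1, …, L`, `G q` is the paper's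
`G⁽q⁾`, with `G L = I`.  `Ft` is the paper's `Fᵀ`, stacking the blocks
`(G⁽ᵖ⁾)ᵀ ⊗ x⁽ᵖ⁾` and `(G⁽ᵖ⁾)ᵀ` for `p = ℓ+1`, `ℓ : Fin L`. -/
theorem spectral_norm_bound_of_G_term_hessian_entrywise
    (L h : ℕ) (hL : 1 ≤ L) (hh : 1 ≤ h)
    (W : ℕ → Matrix (Fin h) (Fin h) ℝ)
    (M : ℝ) (hM : 0 < M) (hhM : 1 < (h : ℝ) * M)
    (hWM : ∀ q < L, ∀ i j, |W q i j| ≤ M)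
    (xv : ℕ → Fin h → ℝ)
    (zv : ℕ → Fin h → ℝ)
    (hz : ∀ q < L, zv q = (W q).mulVec (xv q))
    (Dm : ℕ → Matrix (Fin h) (Fin h) ℝ)
    (hD : ∀ q < L, Dm q = Matrix.diagonal fun i => if 0 ≤ zv q i then (1 : ℝ) else 0)
    (hxrec : ∀ q < L, xv (q + 1) = (Dm q).mulVec (zv q))
    (G : ℕ → Matrix (Fin h) (Fin h) ℝ)
    (hGL : G L = 1)
    (hG : ∀ q, q + 1 < L → G (q + 1) = G (q + 2) * W (q + 1) * Dm q)
    (Ft : Matrix (Fin L × ((Fin h × Fin h) ⊕ Fin h)) (Fin h) ℝ)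
    (hFt1 : ∀ (ℓ : Fin L) (i : Fin h) (a : Fin h) (j : Fin h),
      Ft (ℓ, Sum.inl (i, a)) j = (G (ℓ.1 + 1))ᵀ i j * xv ℓ.1 a)
    (hFt2 : ∀ (ℓ : Fin L) (i : Fin h) (j : Fin h),
      Ft (ℓ, Sum.inr i) j = (G (ℓ.1 + 1))ᵀ i j)
    (pv : Fin h → ℝ) (hpv : ∀ j, 0 ≤ pv j) (hpsum : ∑ j, pv j = 1)
    (Mx : ℝ) (hx : eNorm (xv 0) ≤ Mx) :
    matrixSpectralNorm (Ft * (Matrix.diagonal pv - Matrix.vecMulVec pv pv) * Ftᵀ) ≤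
      (L : ℝ) * Real.sqrt 2 * Mx ^ 2 * ((h : ℝ) * M) ^ (2 * L)
        + Real.sqrt 2 * (((h : ℝ) * M) ^ 2 * (((h : ℝ) * M) ^ (2 * L) - 1)
            / (((h : ℝ) * M) ^ 2 - 1)) :=
  spectral_norm_bound_of_G_term_hessian_entrywise_general L h W M hM hhM hWM xv zv hz Dm hD hxrec G
    hGL hG Ft hFt1 hFt2 pv hpv hpsum Mx hx
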